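/- Let N ≥ 2 be an integer, let arccot denote the inverse cotangent with range (0, π), and suppose α ∈ ℝ satisfies 0 < α ≤ (1/2)·arccot( (−N+6)/(2√(N−1)) ). Let v = (sin α, cos α) ∈ ℂ². Then for every φ ∈ [−π, π], the one-step target probability satisfies |(A(φ)·v)₀|² ≤ |(A(π)·v)₀|²; that is, the classical Grover phase change φ = π is optimal in the region R₁. -/

import Mathlib

open Real Complex Matrix

/-- The generalized Grover iteration matrix with phase `φ` for a database of size `N`. -/
noncomputable def groverA (N : ℕ) (φ : ℝ) : Matrix (Fin 2) (Fin 2) ℂ :=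
  !![Complex.exp (φ * Complex.I) * ((1 - Complex.exp (φ * Complex.I)) / (N : ℂ) - 1),
     ((Real.sqrt ((N : ℝ) - 1) : ℂ) / (N : ℂ)) * (1 - Complex.exp (φ * Complex.I));
     ((Real.sqrt ((N : ℝ) - 1) : ℂ) / (N : ℂ)) * Complex.exp (φ * Complex.I) *
       (1 - Complex.exp (φ * Complex.I)),
     -(1 / (N : ℂ) + (1 - 1 / (N : ℂ)) * Complex.exp (φ * Complex.I))]

/-- The one-step target probability: the squared modulus of the first component of `A(φ)·v`. -/
noncomputable def targetProb (N : ℕ) (φ : ℝ) (v : Fin 2 → ℂ) : ℝ :=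
  ‖(groverA N φ).mulVec v 0‖ ^ 2

/-- The inverse cotangent with range `(0, π)`. -/
noncomputable def arccot (x : ℝ) : ℝ := Real.pi / 2 - Real.arctan x

/-!
Writing `x = cos φ`, the gain `P(π) - P(φ)` factors as `2 (1 + x) B(x) / N²` with
`B(x) = (N - 1) cos 2α + (√(N - 1) / 2) sin 2α (2x + N - 4)`, linear in `x`.
The bound `2α ≤ arccot((6 - N) / (2√(N - 1)))` says exactly
`(6 - N) / (2√(N - 1)) · sin 2α ≤ cos 2α`; multiplied by `N - 1` it gives
`B(x) ≥ √(N - 1) sin 2α (1 + x) ≥ 0`.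
-/

lemma targetProb_sin_cos_mul_sq (N : ℕ) (hN : 1 ≤ N) (α φ : ℝ) :
    targetProb N φ ![(Real.sin α : ℂ), (Real.cos α : ℂ)] * (N : ℝ) ^ 2 =
      Real.sin α ^ 2 * (((N : ℝ) - 1) ^ 2 + 1 + 2 * ((N : ℝ) - 1) * Real.cos φ)
      + 2 * ((N : ℝ) - 1) * Real.cos α ^ 2 * (1 - Real.cos φ)
      + 2 * Real.sin α * Real.cos α * √((N : ℝ) - 1) * (1 - Real.cos φ)
        * ((N : ℝ) + 2 * Real.cos φ) := by
  have hN0 : (N : ℝ) ≠ 0 := by positivity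
  have hr : √(-1 + (N : ℝ)) ^ 2 = -1 + (N : ℝ) := by
    have : (1 : ℝ) ≤ N := by exact_mod_cast hN
    exact Real.sq_sqrt (by linarith)
  have hsin : Real.sin φ ^ 2 = 1 - Real.cos φ ^ 2 := by linarith [Real.sin_sq_add_cos_sq φ]
  have hsin4 : Real.sin φ ^ 4 = (1 - Real.cos φ ^ 2) ^ 2 := by rw [← hsin]; ring
  rw [targetProb, Complex.sq_norm, Complex.normSq_apply]
  simp only [mulVec, dotProduct, groverA, exp_mul_I, one_div, neg_add_rev, Fin.isValue, of_apply,
    cons_val', cons_val_fin_one, cons_val_zero, ofReal_sin, ofReal_cos, Fin.sum_univ_two,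
    cons_val_one, add_re, mul_re, cos_ofReal_re, sin_ofReal_re, I_re, mul_zero, sin_ofReal_im,
    I_im, mul_one, sub_self, add_zero, sub_re, div_natCast_re, one_re, add_im, cos_ofReal_im,
    mul_im, zero_add, sub_im, div_natCast_im, one_im, zero_sub, sub_zero, ofReal_re, ofReal_im,
    zero_div, mul_neg, zero_mul, neg_zero, neg_mul]
  ring_nf
  rw [hr, hsin, hsin4]
  field_simp
  ring

lemma targetProb_pi_sub_targetProb (N : ℕ) (hN : 1 ≤ N) (α φ : ℝ) :
    targetProb N π ![(Real.sin α : ℂ), (Real.cos α : ℂ)]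
        - targetProb N φ ![(Real.sin α : ℂ), (Real.cos α : ℂ)] =
      2 * (1 + Real.cos φ) * (((N : ℝ) - 1) * Real.cos (2 * α)
        + √((N : ℝ) - 1) / 2 * Real.sin (2 * α) * (2 * Real.cos φ + N - 4)) / (N : ℝ) ^ 2 := by
  have hN0 : (N : ℝ) ≠ 0 := by positivity
  have hφ := targetProb_sin_cos_mul_sq N hN α φ
  have hπ := targetProb_sin_cos_mul_sq N hN α π
  rw [Real.cos_pi] at hπ
  rw [eq_div_iff (by positivity), sub_mul, hφ, hπ, Real.sin_two_mul, Real.cos_two_mul']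
  ring

lemma arccot_lt_pi (t : ℝ) : arccot t < π := by
  rw [arccot]
  linarith [Real.neg_pi_div_two_lt_arctan t]

lemma mul_sin_le_cos_of_le_arccot {t β : ℝ} (hβ0 : 0 ≤ β) (hβ : β ≤ arccot t) :
    t * Real.sin β ≤ Real.cos β := by
  have hsub : 0 ≤ Real.sin (arccot t - β) :=
    Real.sin_nonneg_of_nonneg_of_le_pi (by linarith) (by linarith [arccot_lt_pi t])
  have hsin_arctan : Real.sin (arctan t) = t * Real.cos (arctan t) := by
    have h := Real.tan_arctan t
    rwa [Real.tan_eq_sin_div_cos, div_eq_iff (Real.cos_arctan_pos t).ne'] at h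
  rw [Real.sin_sub, arccot, Real.sin_pi_div_two_sub, Real.cos_pi_div_two_sub, hsin_arctan]
    at hsub
  nlinarith [Real.cos_arctan_pos t]

theorem stmt_12 (N : ℕ) (hN : 2 ≤ N) (α : ℝ)
    (hα : 0 < α ∧ α ≤ (1 / 2) * arccot ((-(N : ℝ) + 6) / (2 * Real.sqrt ((N : ℝ) - 1))))
    (v : Fin 2 → ℂ) (hv : v = ![(Real.sin α : ℂ), (Real.cos α : ℂ)]) :
    ∀ φ ∈ Set.Icc (-Real.pi) Real.pi,
      targetProb N φ v ≤ targetProb N Real.pi v := by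
  intro φ _
  subst hv
  obtain ⟨hα0, hα1⟩ := hα
  set t := (-(N : ℝ) + 6) / (2 * √((N : ℝ) - 1))
  have hN1 : (1 : ℝ) ≤ N - 1 := by
    have : (2 : ℝ) ≤ N := by exact_mod_cast hN
    linarith
  have hr : √((N : ℝ) - 1) ^ 2 = N - 1 := Real.sq_sqrt (by linarith)
  have hr0 : 0 < √((N : ℝ) - 1) := Real.sqrt_pos.mpr (by linarith)
  have hsin : 0 < Real.sin (2 * α) :=
    Real.sin_pos_of_pos_of_lt_pi (by linarith) (by linarith [arccot_lt_pi t])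
  have hcot :
      √((N : ℝ) - 1) / 2 * Real.sin (2 * α) * (6 - N) ≤ ((N : ℝ) - 1) * Real.cos (2 * α) :=
    calc √((N : ℝ) - 1) / 2 * Real.sin (2 * α) * (6 - N)
        = ((N : ℝ) - 1) * (t * Real.sin (2 * α)) := by
          simp only [t]
          field_simp
          rw [hr]
          ring
      _ ≤ ((N : ℝ) - 1) * Real.cos (2 * α) :=
          mul_le_mul_of_nonneg_left (mul_sin_le_cos_of_le_arccot (by linarith) (by linarith))
            (by linarith)
  have hcosφ : 0 ≤ 1 + Real.cos φ := by linarith [Real.neg_one_le_cos φ]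
  have hgain : 0 ≤ ((N : ℝ) - 1) * Real.cos (2 * α)
      + √((N : ℝ) - 1) / 2 * Real.sin (2 * α) * (2 * Real.cos φ + N - 4) := by
    nlinarith [mul_nonneg (mul_pos hr0 hsin).le hcosφ]
  rw [← sub_nonneg, targetProb_pi_sub_targetProb N (by omega)]
  positivity
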